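/- arXiv:2302.04214 — 6 statements merged into one kernel-verified Lean document; each statement's English description precedes it below -/
import Mathlib

section
/- Under the same summability hypotheses, the first moment Σ_n n·P_n(t) is conserved by the bounded confidence model: d/dt Σ_n n P_n(t) = 0. -/
lemma tele_int (g : ℤ → ℝ) (a : ℤ) :
    ∀ b, a ≤ b → ∑ n ∈ Finset.Icc a b, (g n - g (n + 1)) = g a - g (b + 1) := by
  refine Int.le_induction ?_ ?_
  · simp
  · intro b hb ih
    have hins : Finset.Icc a (b + 1) = insert (b + 1) (Finset.Icc a b) := by
      ext x; simp [Finset.mem_Icc, Finset.mem_insert]; omega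
    have hnot : (b + 1) ∉ Finset.Icc a b := by simp
    rw [hins, Finset.sum_insert hnot, ih]
    ring

/-- First moment conservation for the bounded confidence model: for finitely
supported solutions, `∑ n, n * P n t` has zero time derivative. -/
theorem bounded_confidence_first_moment_conserved
    (P : ℤ → ℝ → ℝ) (S : Finset ℤ)
    (hsupp : ∀ t : ℝ, ∀ n : ℤ, n ∉ S → P n t = 0)
    (hODE : ∀ (n : ℤ) (t : ℝ),
      HasDerivAt (P n)
        (2 * P (n + 1) t * P (n - 1) t - P n t * (P (n + 2) t + P (n - 2) t)) t) :
    ∀ t : ℝ, HasDerivAt (fun s => ∑ n ∈ S, (n : ℝ) * P n s) 0 t := by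
  intro t
  have hD : HasDerivAt (fun s => ∑ n ∈ S, (n : ℝ) * P n s)
      (∑ n ∈ S, (n : ℝ) *
        (2 * P (n + 1) t * P (n - 1) t - P n t * (P (n + 2) t + P (n - 2) t))) t :=
    HasDerivAt.fun_sum fun n _ => (hODE n t).const_mul _
  rcases S.eq_empty_or_nonempty with hS | hS
  · simpa [hS] using hD
  -- derivative term vanishes for n ∉ S
  have hzero : ∀ n : ℤ, n ∉ S →
      2 * P (n + 1) t * P (n - 1) t - P n t * (P (n + 2) t + P (n - 2) t) = 0 := by
    intro n hn
    have hPn : P n = fun _ => (0 : ℝ) := funext fun s => hsupp s n hn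
    have h0 : HasDerivAt (P n) 0 t := by rw [hPn]; exact hasDerivAt_const t 0
    exact ((hODE n t).unique h0)
  set a : ℤ := S.min' hS - 3 with ha
  set b : ℤ := S.max' hS + 3 with hb
  have hmem : ∀ n ∈ S, a ≤ n ∧ n ≤ b := fun n hn =>
    ⟨by have := S.min'_le n hn; omega, by have := S.le_max' n hn; omega⟩
  set f : ℤ → ℝ := fun n => (n : ℝ) *
      (2 * P (n + 1) t * P (n - 1) t - P n t * (P (n + 2) t + P (n - 2) t)) with hf
  set G : ℤ → ℝ := fun m =>
      ((m : ℝ) - 1) * P (m - 1) t * P (m + 1) t - (m : ℝ) * P (m - 2) t * P m t with hG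
  have hfG : ∀ n : ℤ, f n = G n - G (n + 1) := by
    intro n
    simp only [hf, hG]
    have e1 : n + 1 - 1 = n := by ring
    have e2 : n + 1 + 1 = n + 2 := by ring
    have e3 : n + 1 - 2 = n - 1 := by ring
    rw [e1, e2, e3]
    push_cast
    ring
  have hsum1 : (∑ n ∈ S, f n) = ∑ n ∈ Finset.Icc a b, f n := by
    refine Finset.sum_subset ?_ ?_
    · intro n hn; rw [Finset.mem_Icc]; exact hmem n hn
    · intro n _ hn; simp [hf, hzero n hn]
  have hab : a ≤ b := by
    have := hmem _ (S.min'_mem hS); omega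
  have hsum2 : (∑ n ∈ Finset.Icc a b, f n) = G a - G (b + 1) := by
    rw [Finset.sum_congr rfl fun n _ => hfG n]
    exact tele_int G a b hab
  have hPa : ∀ m : ℤ, m ≤ S.min' hS - 1 → P m t = 0 := by
    intro m hm
    refine hsupp t m fun hmem' => ?_
    have := S.min'_le m hmem'; omega
  have hPb : ∀ m : ℤ, S.max' hS + 1 ≤ m → P m t = 0 := by
    intro m hm
    refine hsupp t m fun hmem' => ?_
    have := S.le_max' m hmem'; omega
  have hGa : G a = 0 := by
    simp [hG, hPa (a - 1) (by omega), hPa (a - 2) (by omega), hPa a (by omega)]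
  have hGb : G (b + 1) = 0 := by
    simp [hG, hPb (b + 1 + 1) (by omega), hPb (b + 1) (by omega),
      hPb (b + 1 - 1) (by omega), hPb (b + 1 - 2) (by omega)]
  have key : (∑ n ∈ S, (n : ℝ) *
      (2 * P (n + 1) t * P (n - 1) t - P n t * (P (n + 2) t + P (n - 2) t))) = 0 := by
    calc (∑ n ∈ S, f n) = ∑ n ∈ Finset.Icc a b, f n := hsum1
      _ = G a - G (b + 1) := hsum2
      _ = 0 := by rw [hGa, hGb]; ring
  rwa [key] at hD
end

section
/- For fixed m > 0 and β ≥ 2, the real part of the dispersion relation Re λ(σ) = m(−2cos 2σ + (4+2β)cos σ − (2+2β)) is nonpositive for all σ ∈ ℝ; moreover, if β > 2 then Re λ(σ) < 0 for all σ with cos σ ≠ 1. -/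
open Real

/-- The bracket vanishes at `cos σ = 1`, and the other factor is positive once `β ≥ 2 ≥ 2 cos σ`. -/
theorem dispersion_re_factor (β σ : ℝ) :
    -2 * cos (2 * σ) + (4 + 2 * β) * cos σ - (2 + 2 * β) =
      -(2 * (1 - cos σ) * (β - 2 * cos σ)) := by
  rw [cos_two_mul]
  ring

/-- For supercritical bias `β ≥ 2`, the real part of the dispersion relation of
the biased bounded confidence model at the uniform state `m > 0` is nonpositive,
and strictly negative for `β > 2` whenever `cos σ ≠ 1`. -/
theorem dispersion_nonpositive_supercritical (m β : ℝ) (hm : 0 < m) (hβ : 2 ≤ β) :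
    (∀ σ : ℝ,
      m * (-2 * Real.cos (2 * σ) + (4 + 2 * β) * Real.cos σ - (2 + 2 * β)) ≤ 0) ∧
    (2 < β → ∀ σ : ℝ, Real.cos σ ≠ 1 →
      m * (-2 * Real.cos (2 * σ) + (4 + 2 * β) * Real.cos σ - (2 + 2 * β)) < 0) := by
  refine ⟨fun σ => ?_, fun hβ' σ hσ => ?_⟩
  · have hc : 0 ≤ 1 - cos σ := sub_nonneg.2 (cos_le_one σ)
    have hb : 0 ≤ β - 2 * cos σ := by linarith [cos_le_one σ]
    rw [dispersion_re_factor]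
    exact mul_nonpos_of_nonneg_of_nonpos hm.le (neg_nonpos.2 (by positivity))
  · have hc : 0 < 1 - cos σ := sub_pos.2 ((cos_le_one σ).lt_of_ne hσ)
    have hb : 0 < β - 2 * cos σ := by linarith [cos_le_one σ]
    rw [dispersion_re_factor]
    exact mul_neg_of_pos_of_neg hm (neg_neg_of_pos (by positivity))
end

section
/- For fixed m > 0 and 0 ≤ β < 2, there exists σ ∈ ℝ such that Re λ(σ) = m(−2cos 2σ + (4+2β)cos σ − (2+2β)) > 0; i.e., the uniform state is spectrally unstable for subcritical bias. -/
open Real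

theorem exists_cos_mem_Ioo {a : ℝ} (ha : a < 1) : ∃ σ : ℝ, cos σ ∈ Set.Ioo a 1 := by
  obtain ⟨b, hab, hb, hb_lt⟩ : ∃ b, a ≤ b ∧ -1 ≤ b ∧ b < 1 :=
    ⟨max a (-1), le_max_left _ _, le_max_right _ _, max_lt ha (by norm_num)⟩
  refine ⟨arccos ((b + 1) / 2), ?_⟩
  rw [cos_arccos (by linarith) (by linarith)]
  constructor <;> linarith

theorem growth_rate_eq_mul_one_sub_cos_mul (m β σ : ℝ) :
    m * (-2 * cos (2 * σ) + (4 + 2 * β) * cos σ - (2 + 2 * β)) =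
      2 * m * (1 - cos σ) * (2 * cos σ - β) := by
  rw [cos_two_mul]
  ring

theorem dispersion_unstable_subcritical_general (m β : ℝ) (hm : 0 < m)
    (hβ2 : β < 2) :
    ∃ σ : ℝ,
      0 < m * (-2 * Real.cos (2 * σ) + (4 + 2 * β) * Real.cos σ - (2 + 2 * β)) := by
  obtain ⟨σ, hβ_lt_cos, hcos_lt_one⟩ := exists_cos_mem_Ioo (a := β / 2) (by linarith)
  refine ⟨σ, ?_⟩
  rw [growth_rate_eq_mul_one_sub_cos_mul]
  have hone_sub_cos : 0 < 1 - cos σ := by linarith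
  have htwo_cos_sub : 0 < 2 * cos σ - β := by linarith
  positivity

/-- For subcritical bias `0 ≤ β < 2`, the uniform state of mass `m > 0` is
spectrally unstable: some Fourier mode has positive growth rate. -/
theorem dispersion_unstable_subcritical (m β : ℝ) (hm : 0 < m)
    (hβ0 : 0 ≤ β) (hβ2 : β < 2) :
    ∃ σ : ℝ,
      0 < m * (-2 * Real.cos (2 * σ) + (4 + 2 * β) * Real.cos σ - (2 + 2 * β)) :=
  dispersion_unstable_subcritical_general m β hm hβ2
end

section
/- For a_*(ζ) = (3/2)sech²(ζ/2), one has ∫_ℝ (a_*'(ζ))² dζ = 6/5 and ∫_ℝ a_*(ζ)(a_*'(ζ))² dζ = 36/35, so that the Melnikov solvability condition 3(1 + c₀/2)∫ a_*(a_*')² = (2 + 3c₀/4)∫ (a_*')² holds exactly for c₀ = −16/15. -/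
/-- Hyperbolic secant. -/
noncomputable def sech (x : ℝ) : ℝ := 2 / (Real.exp x + Real.exp (-x))

/-- The leading-order homoclinic profile `a_*(ζ) = (3/2) sech²(ζ/2)`. -/
noncomputable def astar (ζ : ℝ) : ℝ := (3 / 2) * (sech (ζ / 2)) ^ 2

open Real MeasureTheory Filter Topology Set

lemma my_cosh_ne (x : ℝ) : Real.cosh x ≠ 0 := (Real.cosh_pos x).ne'

lemma astar_eq (ζ : ℝ) : astar ζ = (3/2) / Real.cosh (ζ/2) ^ 2 := by
  rw [astar, sech, Real.cosh_eq]
  rw [div_pow]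
  have h : Real.exp (ζ/2) + Real.exp (-(ζ/2)) ≠ 0 := by positivity
  field_simp

lemma hasDerivAt_astar (ζ : ℝ) :
    HasDerivAt astar (-(3/2) * Real.sinh (ζ/2) / Real.cosh (ζ/2) ^ 3) ζ := by
  have h1 : HasDerivAt (fun ζ : ℝ => Real.cosh (ζ/2)) (Real.sinh (ζ/2) * (1/2)) ζ := by
    have := (Real.hasDerivAt_cosh (ζ/2)).comp ζ ((hasDerivAt_id ζ).div_const 2)
    convert this using 1
    · rfl
    · rfl
    · rfl
  have h2 := h1.pow 2
  have h3 := (h2.inv (pow_ne_zero 2 (my_cosh_ne _))).const_mul ((3:ℝ)/2)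
  have he : astar = fun ζ : ℝ => (3/2) * ((Real.cosh (ζ/2)) ^ 2)⁻¹ := by
    funext x; rw [astar_eq]; ring
  rw [he]
  convert h3 using 1
  · rfl
  · rfl
  · rfl
  have hc := my_cosh_ne (ζ/2)
  simp only [Pi.pow_apply]
  field_simp
  ring

lemma deriv_astar (ζ : ℝ) :
    deriv astar ζ = -(3/2) * Real.sinh (ζ/2) / Real.cosh (ζ/2) ^ 3 :=
  (hasDerivAt_astar ζ).deriv

lemma my_hasDerivAt_tanh (x : ℝ) : HasDerivAt Real.tanh (1 / Real.cosh x ^ 2) x := by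
  have h := (Real.hasDerivAt_sinh x).div (Real.hasDerivAt_cosh x) (my_cosh_ne x)
  have he : Real.tanh = fun x => Real.sinh x / Real.cosh x :=
    funext fun x => Real.tanh_eq_sinh_div_cosh x
  rw [he]
  convert h using 1
  · rfl
  · rfl
  · rfl
  have hs := Real.cosh_sq x
  have hc := my_cosh_ne x
  field_simp
  linarith

lemma hasDerivAt_T (ζ : ℝ) :
    HasDerivAt (fun ζ : ℝ => Real.tanh (ζ/2)) (1 / (2 * Real.cosh (ζ/2) ^ 2)) ζ := by
  have := (my_hasDerivAt_tanh (ζ/2)).comp ζ ((hasDerivAt_id ζ).div_const 2)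
  convert this using 1
  · rfl
  · rfl
  · rfl
  ring

lemma tanh_tendsto_atTop : Tendsto Real.tanh atTop (𝓝 1) := by
  have he : ∀ x : ℝ, Real.tanh x = (1 - Real.exp (-x) ^ 2) / (1 + Real.exp (-x) ^ 2) := by
    intro x
    rw [Real.tanh_eq_sinh_div_cosh, Real.sinh_eq, Real.cosh_eq]
    have h1 : Real.exp x ≠ 0 := Real.exp_ne_zero x
    have h2 : Real.exp (-x) ≠ 0 := Real.exp_ne_zero (-x)
    have h3 : Real.exp x * Real.exp (-x) = 1 := by
      rw [← Real.exp_add]; simp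
    have h4 : (0:ℝ) < 1 + Real.exp (-x) ^ 2 := by positivity
    field_simp
    linear_combination (2 * Real.exp (-x)) * h3
  have hh : Tendsto (fun x : ℝ => Real.exp (-x) ^ 2) atTop (𝓝 0) := by
    simpa using (Real.tendsto_exp_neg_atTop_nhds_zero.pow 2)
  have hnum : Tendsto (fun x : ℝ => 1 - Real.exp (-x) ^ 2) atTop (𝓝 (1 - 0)) :=
    tendsto_const_nhds.sub hh
  have hden : Tendsto (fun x : ℝ => 1 + Real.exp (-x) ^ 2) atTop (𝓝 (1 + 0)) :=
    tendsto_const_nhds.add hh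
  have h := hnum.div hden (by norm_num)
  norm_num at h
  exact Tendsto.congr (fun x => (he x).symm) h

lemma tanh_tendsto_atBot : Tendsto Real.tanh atBot (𝓝 (-1)) := by
  have := (tanh_tendsto_atTop.comp tendsto_neg_atBot_atTop).neg
  simp only [Function.comp_def] at this
  refine Tendsto.congr (fun x => ?_) this
  rw [← Real.tanh_neg, neg_neg]

/-- Antiderivative of `(a_*')²`. -/
noncomputable def F1 (ζ : ℝ) : ℝ :=
  (3/2) * Real.tanh (ζ/2) ^ 3 - (9/10) * Real.tanh (ζ/2) ^ 5

/-- Antiderivative of `a_* (a_*')²`. -/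
noncomputable def F2 (ζ : ℝ) : ℝ :=
  (9/4) * Real.tanh (ζ/2) ^ 3 - (27/10) * Real.tanh (ζ/2) ^ 5
    + (27/28) * Real.tanh (ζ/2) ^ 7

lemma key_algebra (ζ : ℝ) :
    Real.tanh (ζ/2) = Real.sinh (ζ/2) / Real.cosh (ζ/2) :=
  Real.tanh_eq_sinh_div_cosh _

lemma hasDerivAt_F1 (ζ : ℝ) : HasDerivAt F1 ((deriv astar ζ) ^ 2) ζ := by
  have hT := hasDerivAt_T ζ
  have h := ((hT.pow 3).const_mul ((3:ℝ)/2)).sub ((hT.pow 5).const_mul ((9:ℝ)/10))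
  convert h using 1
  · rfl
  · rfl
  · rfl
  rw [deriv_astar, key_algebra]
  have hc := my_cosh_ne (ζ/2)
  have hsq := Real.cosh_sq (ζ/2)
  norm_num
  field_simp
  linear_combination (-90 * Real.sinh (ζ/2) ^ 2) * hsq

lemma hasDerivAt_F2 (ζ : ℝ) :
    HasDerivAt F2 (astar ζ * (deriv astar ζ) ^ 2) ζ := by
  have hT := hasDerivAt_T ζ
  have h := (((hT.pow 3).const_mul ((9:ℝ)/4)).sub ((hT.pow 5).const_mul ((27:ℝ)/10))).add
    ((hT.pow 7).const_mul ((27:ℝ)/28))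
  convert h using 1
  · rfl
  · rfl
  · rfl
  rw [deriv_astar, astar_eq, key_algebra]
  have hc := my_cosh_ne (ζ/2)
  have hsq := Real.cosh_sq (ζ/2)
  norm_num
  field_simp
  linear_combination (-30240 * Real.sinh (ζ/2) ^ 2 *
    (Real.cosh (ζ/2) ^ 2 - Real.sinh (ζ/2) ^ 2 + 1)) * hsq

lemma F1_tendsto : Tendsto F1 atTop (𝓝 (3/5)) := by
  have ht : Tendsto (fun ζ : ℝ => Real.tanh (ζ/2)) atTop (𝓝 1) :=
    tanh_tendsto_atTop.comp (tendsto_id.atTop_div_const two_pos)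
  have := ((ht.pow 3).const_mul ((3:ℝ)/2)).sub ((ht.pow 5).const_mul ((9:ℝ)/10))
  norm_num at this
  exact this

lemma F2_tendsto : Tendsto F2 atTop (𝓝 (18/35)) := by
  have ht : Tendsto (fun ζ : ℝ => Real.tanh (ζ/2)) atTop (𝓝 1) :=
    tanh_tendsto_atTop.comp (tendsto_id.atTop_div_const two_pos)
  have := (((ht.pow 3).const_mul ((9:ℝ)/4)).sub ((ht.pow 5).const_mul ((27:ℝ)/10))).add
    ((ht.pow 7).const_mul ((27:ℝ)/28))
  norm_num at this
  convert this using 2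
  rfl

lemma even_integrand1 (ζ : ℝ) : (deriv astar |ζ|) ^ 2 = (deriv astar ζ) ^ 2 := by
  rcases abs_choice ζ with h | h
  · rw [h]
  · rw [h, deriv_astar, deriv_astar, neg_div, Real.sinh_neg, Real.cosh_neg]
    ring

lemma astar_even (ζ : ℝ) : astar |ζ| = astar ζ := by
  rcases abs_choice ζ with h | h
  · rw [h]
  · rw [h, astar_eq, astar_eq, neg_div, Real.cosh_neg]

lemma integral1 : (∫ ζ : ℝ, (deriv astar ζ) ^ 2) = 6 / 5 := by
  have h1 : (∫ ζ : ℝ, (deriv astar ζ) ^ 2) = 2 * ∫ ζ in Ioi (0:ℝ), (deriv astar ζ) ^ 2 := by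
    rw [← integral_comp_abs (f := fun x => (deriv astar x) ^ 2)]
    congr 1; funext ζ; exact (even_integrand1 ζ).symm
  rw [h1]
  have h2 : (∫ ζ in Ioi (0:ℝ), (deriv astar ζ) ^ 2) = 3/5 - F1 0 := by
    refine integral_Ioi_of_hasDerivAt_of_nonneg' (fun x _ => hasDerivAt_F1 x)
      (fun x _ => sq_nonneg _) F1_tendsto
  rw [h2]
  norm_num [F1, Real.tanh_zero]

lemma integral2 : (∫ ζ : ℝ, astar ζ * (deriv astar ζ) ^ 2) = 36 / 35 := by
  have h1 : (∫ ζ : ℝ, astar ζ * (deriv astar ζ) ^ 2)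
      = 2 * ∫ ζ in Ioi (0:ℝ), astar ζ * (deriv astar ζ) ^ 2 := by
    rw [← integral_comp_abs (f := fun x => astar x * (deriv astar x) ^ 2)]
    congr 1; funext ζ
    rw [even_integrand1, astar_even]
  rw [h1]
  have h2 : (∫ ζ in Ioi (0:ℝ), astar ζ * (deriv astar ζ) ^ 2) = 18/35 - F2 0 := by
    refine integral_Ioi_of_hasDerivAt_of_nonneg' (fun x _ => hasDerivAt_F2 x)
      (fun x _ => mul_nonneg ?_ (sq_nonneg _)) F2_tendsto
    rw [astar_eq]
    positivity
  rw [h2]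
  norm_num [F2, Real.tanh_zero]

/-- Melnikov integrals for the homoclinic `a_*`: `∫ (a_*')² = 6/5`,
`∫ a_* (a_*')² = 36/35`, and the solvability condition
`3(1 + c₀/2)∫ a_*(a_*')² = (2 + 3c₀/4)∫ (a_*')²` holds for `c₀ = −16/15`. -/
theorem melnikov_integrals :
    (∫ ζ : ℝ, (deriv astar ζ) ^ 2) = 6 / 5 ∧
    (∫ ζ : ℝ, astar ζ * (deriv astar ζ) ^ 2) = 36 / 35 ∧
    ∀ c₀ : ℝ, c₀ = -16 / 15 →
      3 * (1 + c₀ / 2) * (∫ ζ : ℝ, astar ζ * (deriv astar ζ) ^ 2)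
        = (2 + 3 * c₀ / 4) * (∫ ζ : ℝ, (deriv astar ζ) ^ 2) := by
  refine ⟨integral1, integral2, fun c₀ hc => ?_⟩
  rw [integral1, integral2, hc]
  norm_num
end

section
/- If Q : ℝ → ℝ is a bounded C¹ solution of the forward-backward delay equation 0 = −cQ'(ξ) + 2Q(ξ−1)Q(ξ+1) − Q(ξ)(Q(ξ−2)+Q(ξ+2)) + β(Q²(ξ+1) − Q²(ξ)), then the functional Φ[Q](L) = −cQ(L) + ∫_{L−1}^{L} Q(y−1)Q(y+1) dy − ∫_{L}^{L+1} Q(y−1)Q(y+1) dy + β∫_{L}^{L+1} Q²(y) dy is independent of L; i.e., Φ is a conserved quantity along the profile. -/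
open intervalIntegral

private lemma hasDerivAt_primitive {f : ℝ → ℝ} (hf : Continuous f) (x : ℝ) :
    HasDerivAt (fun u => ∫ y in (0:ℝ)..u, f y) (f x) x :=
  intervalIntegral.integral_hasDerivAt_right (hf.intervalIntegrable 0 x)
    (hf.stronglyMeasurableAtFilter _ _) hf.continuousAt

/-- For any bounded `C¹` solution `Q` of the traveling-wave forward-backward
delay equation of the biased bounded confidence model, the functional
`Φ[Q](L) = −cQ(L) + ∫_{L−1}^{L} Q(y−1)Q(y+1) dy − ∫_{L}^{L+1} Q(y−1)Q(y+1) dy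
+ β ∫_{L}^{L+1} Q²(y) dy` is independent of `L`. -/
theorem conserved_quantity_traveling_wave
    (c β : ℝ) (Q : ℝ → ℝ)
    (hQ : ContDiff ℝ 1 Q)
    (hbdd : ∃ C : ℝ, ∀ ξ : ℝ, |Q ξ| ≤ C)
    (heq : ∀ ξ : ℝ,
      0 = -c * deriv Q ξ + 2 * Q (ξ - 1) * Q (ξ + 1)
        - Q ξ * (Q (ξ - 2) + Q (ξ + 2)) + β * ((Q (ξ + 1)) ^ 2 - (Q ξ) ^ 2)) :
    ∀ L₁ L₂ : ℝ,
      (-c * Q L₁ + (∫ y in (L₁ - 1)..L₁, Q (y - 1) * Q (y + 1))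
        - (∫ y in L₁..(L₁ + 1), Q (y - 1) * Q (y + 1))
        + β * ∫ y in L₁..(L₁ + 1), (Q y) ^ 2)
      = (-c * Q L₂ + (∫ y in (L₂ - 1)..L₂, Q (y - 1) * Q (y + 1))
        - (∫ y in L₂..(L₂ + 1), Q (y - 1) * Q (y + 1))
        + β * ∫ y in L₂..(L₂ + 1), (Q y) ^ 2) := by
  have hQc : Continuous Q := hQ.continuous
  set f : ℝ → ℝ := fun y => Q (y - 1) * Q (y + 1) with hf_def
  set g : ℝ → ℝ := fun y => (Q y) ^ 2 with hg_def
  have hfc : Continuous f := ((hQc.comp (by continuity)).mul (hQc.comp (by continuity)))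
  have hgc : Continuous g := hQc.pow 2
  set F : ℝ → ℝ := fun u => ∫ y in (0:ℝ)..u, f y with hF_def
  set G : ℝ → ℝ := fun u => ∫ y in (0:ℝ)..u, g y with hG_def
  set Φ : ℝ → ℝ := fun L =>
    -c * Q L + (F L - F (L - 1)) - (F (L + 1) - F L) + β * (G (L + 1) - G L) with hΦ_def
  -- Φ has derivative 0 everywhere
  have hΦderiv : ∀ L : ℝ, HasDerivAt Φ 0 L := by
    intro L
    have hQd : HasDerivAt Q (deriv Q L) L :=
      (hQ.differentiable one_ne_zero L).hasDerivAt
    have hid : HasDerivAt (fun x : ℝ => x) 1 L := hasDerivAt_id L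
    have hFm : HasDerivAt (fun x : ℝ => F (x - 1)) (f (L - 1)) L := by
      have := (hasDerivAt_primitive hfc (L - 1)).comp L (hid.sub_const 1)
      rw [mul_one] at this; exact this
    have hFp : HasDerivAt (fun x : ℝ => F (x + 1)) (f (L + 1)) L := by
      have := (hasDerivAt_primitive hfc (L + 1)).comp L (hid.add_const 1)
      rw [mul_one] at this; exact this
    have hF0 : HasDerivAt F (f L) L := hasDerivAt_primitive hfc L
    have hGp : HasDerivAt (fun x : ℝ => G (x + 1)) (g (L + 1)) L := by
      have := (hasDerivAt_primitive hgc (L + 1)).comp L (hid.add_const 1)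
      rw [mul_one] at this; exact this
    have hG0 : HasDerivAt G (g L) L := hasDerivAt_primitive hgc L
    have h : HasDerivAt Φ
        (-c * deriv Q L + (f L - f (L - 1)) - (f (L + 1) - f L)
          + β * (g (L + 1) - g L)) L := by
      exact (((hQd.const_mul (-c)).add (hF0.sub hFm)).sub (hFp.sub hF0)).add
        ((hGp.sub hG0).const_mul β)
    have hzero : -c * deriv Q L + (f L - f (L - 1)) - (f (L + 1) - f L)
        + β * (g (L + 1) - g L) = 0 := by
      have := heq L
      simp only [hf_def, hg_def]
      ring_nf
      ring_nf at this
      linarith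
    rwa [hzero] at h
  have hconst : ∀ L₁ L₂ : ℝ, Φ L₁ = Φ L₂ := by
    intro L₁ L₂
    have := is_const_of_deriv_eq_zero (f := Φ)
      (fun x => (hΦderiv x).differentiableAt) (fun x => (hΦderiv x).deriv) L₁ L₂
    exact this
  intro L₁ L₂
  -- rewrite the integrals in terms of F, G
  have key : ∀ L : ℝ,
      -c * Q L + (∫ y in (L - 1)..L, Q (y - 1) * Q (y + 1))
        - (∫ y in L..(L + 1), Q (y - 1) * Q (y + 1))
        + β * ∫ y in L..(L + 1), (Q y) ^ 2 = Φ L := by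
    intro L
    have h1 : (∫ y in (L - 1)..L, f y) = F L - F (L - 1) := by
      rw [hF_def]
      rw [← intervalIntegral.integral_interval_sub_left
        (hfc.intervalIntegrable 0 L) (hfc.intervalIntegrable 0 (L - 1))]
    have h2 : (∫ y in L..(L + 1), f y) = F (L + 1) - F L := by
      rw [hF_def]
      rw [← intervalIntegral.integral_interval_sub_left
        (hfc.intervalIntegrable 0 (L + 1)) (hfc.intervalIntegrable 0 L)]
    have h3 : (∫ y in L..(L + 1), g y) = G (L + 1) - G L := by
      rw [hG_def]
      rw [← intervalIntegral.integral_interval_sub_left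
        (hgc.intervalIntegrable 0 (L + 1)) (hgc.intervalIntegrable 0 L)]
    simp only [hΦ_def, hf_def, hg_def] at *
    rw [h1, h2, h3]
  rw [key L₁, key L₂, hconst L₁ L₂]
end

section
/- The characteristic function d(ν) = −4mν − 6m + 2m(e^ν + e^{−ν}) − 2m(e^{2ν} + e^{−2ν}) + 4m e^ν has no purely imaginary zeros other than ν = 0: for ℓ ∈ ℝ, ℓ ≠ 0, d(iℓ) ≠ 0. -/
/-!
On the imaginary axis the even part `−6m + 4m cos ℓ − 4m cos 2ℓ` of `d(iℓ)` is real, so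
`Im d(iℓ) = 4m (sin ℓ − ℓ)`, which vanishes only at `ℓ = 0` because `|sin ℓ| < |ℓ|` for `ℓ ≠ 0`.
-/

open Complex

noncomputable def characteristicFn (m : ℝ) (ν : ℂ) : ℂ :=
  -4 * (m : ℂ) * ν - 6 * m + 2 * m * (exp ν + exp (-ν)) - 2 * m * (exp (2 * ν) + exp (-(2 * ν)))
    + 4 * m * exp ν

theorem Real.sin_ne_self_of_ne_zero {x : ℝ} (hx : x ≠ 0) : Real.sin x ≠ x := fun h =>
  (Real.abs_sin_lt_abs hx).ne (congrArg abs h)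

theorem characteristicFn_I_mul_im (m ℓ : ℝ) :
    (characteristicFn m (I * ℓ)).im = 4 * m * (Real.sin ℓ - ℓ) := by
  simp only [characteristicFn, neg_mul, add_im, sub_im, neg_im, mul_im, mul_re, re_ofNat, ofReal_re,
    im_ofNat, ofReal_im, mul_zero, sub_zero, I_re, I_im, one_mul, zero_add, zero_mul, add_zero,
    sub_self, exp_im, Real.exp_zero, neg_re, neg_zero, Real.sin_neg, mul_neg, add_neg_cancel, add_re,
    exp_re, Real.cos_neg]
  ring

/-- The characteristic function
`d(ν) = −4mν − 6m + 2m(e^ν + e^{−ν}) − 2m(e^{2ν} + e^{−2ν}) + 4m e^ν`,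
with `m > 0`, has no purely imaginary zeros other than `ν = 0`. -/
theorem characteristic_no_imaginary_zeros (m : ℝ) (hm : 0 < m) :
    ∀ ℓ : ℝ, ℓ ≠ 0 →
      (-4 * (m : ℂ) * (Complex.I * ℓ) - 6 * m
        + 2 * m * (Complex.exp (Complex.I * ℓ) + Complex.exp (-(Complex.I * ℓ)))
        - 2 * m * (Complex.exp (2 * (Complex.I * ℓ)) + Complex.exp (-(2 * (Complex.I * ℓ))))
        + 4 * m * Complex.exp (Complex.I * ℓ)) ≠ 0 := by
  intro ℓ hℓ hzero
  have him : (characteristicFn m (I * ℓ)).im = 0 := by rw [characteristicFn, hzero, zero_im]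
  rw [characteristicFn_I_mul_im] at him
  exact mul_ne_zero (by positivity) (sub_ne_zero.2 (Real.sin_ne_self_of_ne_zero hℓ)) him
end
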